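/- Let f₁, …, fₙ ∈ S² be n distinct points (n ≥ 2) and suppose Π₁, …, Πₙ are n distinct planes through the origin whose reflections each permute {f₁, …, fₙ}. If every one of the reflections R_{Π₁}, …, R_{Πₙ} fixes f₁, then n = 2 and f₂ = -f₁. -/

import Mathlib

/-!
Each plane contains `f₁`, so all the normals `ν k` are orthogonal to `f₁`. Suppose some `f j` is
not `±f₁`; having the same norm, it is then independent of `f₁`, and the two span a plane `W`.
The `n` points `R_k (f j)` are pairwise distinct: `R_k (f j) = R_l (f j)` forces the projections of
`f j` onto the lines `ℝ ν k` and `ℝ ν l` to agree, so either the two lines coincide or both are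
orthogonal to `W`, i.e. both equal the line `Wᗮ`. None of them is `f₁ = R_k f₁`, which leaves only
`n - 1` possible values. Hence every `f j` is `±f₁`, and injectivity of `f` forces `n = 2`.
-/

open Module Set

variable {E : Type*} [NormedAddCommGroup E] [InnerProductSpace ℝ E]

namespace Submodule

theorem starProjection_eq_of_reflection_eq {K L : Submodule ℝ E}
    [K.HasOrthogonalProjection] [L.HasOrthogonalProjection] {x : E}
    (h : K.reflection x = L.reflection x) : K.starProjection x = L.starProjection x := by
  rw [reflection_apply, reflection_apply, sub_left_inj] at h
  linear_combination (norm := module) (1 / 2 : ℝ) • h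

theorem span_singleton_eq_or_mem_inf_of_starProjection_eq {u v x : E}
    (h : (ℝ ∙ u).starProjection x = (ℝ ∙ v).starProjection x) :
    (ℝ ∙ u) = (ℝ ∙ v) ∨ x ∈ (ℝ ∙ u)ᗮ ⊓ (ℝ ∙ v)ᗮ := by
  by_cases h0 : (ℝ ∙ u).starProjection x = 0
  · exact .inr ⟨(starProjection_apply_eq_zero_iff _).mp h0,
      (starProjection_apply_eq_zero_iff _).mp (h ▸ h0)⟩
  have line_eq : ∀ w : E, (ℝ ∙ w).starProjection x ≠ 0 →
      (ℝ ∙ (ℝ ∙ w).starProjection x) = (ℝ ∙ w) := by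
    intro w hw
    rw [starProjection_singleton] at hw ⊢
    exact span_singleton_smul_eq (left_ne_zero_of_smul hw).isUnit w
  left
  rw [← line_eq u h0, ← line_eq v (h ▸ h0), h]

theorem span_singleton_eq_orthogonal_of_le [FiniteDimensional ℝ E] {W : Submodule ℝ E}
    (hW : finrank ℝ W + 1 = finrank ℝ E) {u : E} (hu : u ≠ 0) (h : W ≤ (ℝ ∙ u)ᗮ) :
    (ℝ ∙ u) = Wᗮ := by
  refine eq_of_le_of_finrank_le (isOrtho_comm.mp h) ?_
  rw [finrank_add_finrank_orthogonal' hW, finrank_span_singleton hu]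

theorem span_singleton_eq_of_reflection_eq [FiniteDimensional ℝ E] (hE : finrank ℝ E = 3)
    {a x u v : E} (hax : LinearIndependent ℝ ![a, x]) (hu : u ≠ 0) (hv : v ≠ 0)
    (hau : a ∈ (ℝ ∙ u)ᗮ) (hav : a ∈ (ℝ ∙ v)ᗮ)
    (h : (ℝ ∙ u)ᗮ.reflection x = (ℝ ∙ v)ᗮ.reflection x) : (ℝ ∙ u) = (ℝ ∙ v) := by
  rw [reflection_orthogonal_apply, reflection_orthogonal_apply, neg_inj] at h
  rcases span_singleton_eq_or_mem_inf_of_starProjection_eq (starProjection_eq_of_reflection_eq h)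
    with h | ⟨hxu, hxv⟩
  · exact h
  set W := span ℝ (range ![a, x])
  have hW : finrank ℝ W + 1 = finrank ℝ E := by
    rw [finrank_span_eq_card hax, hE, Fintype.card_fin]
  have hle : ∀ w : E, a ∈ (ℝ ∙ w)ᗮ → x ∈ (ℝ ∙ w)ᗮ → W ≤ (ℝ ∙ w)ᗮ := fun w ha hx =>
    span_le.mpr <| range_subset_iff.mpr <| Fin.forall_fin_two.mpr ⟨ha, hx⟩
  rw [span_singleton_eq_orthogonal_of_le hW hu (hle u hau hxu),
    span_singleton_eq_orthogonal_of_le hW hv (hle v hav hxv)]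

end Submodule

theorem linearIndependent_pair_of_norm_eq {a x : E} (hnorm : ‖x‖ = ‖a‖) (hxa : x ≠ a)
    (hxa' : x ≠ -a) : LinearIndependent ℝ ![a, x] := by
  have ha : a ≠ 0 := by
    rintro rfl
    exact hxa (norm_eq_zero.mp (hnorm.trans norm_zero))
  refine (LinearIndependent.pair_iff' ha).mpr fun c hc => ?_
  have hc1 : |c| = 1 := by
    rw [← hc, norm_smul, Real.norm_eq_abs] at hnorm
    exact (mul_eq_right₀ (norm_ne_zero_iff.mpr ha)).mp hnorm
  rcases abs_eq zero_le_one |>.mp hc1 with rfl | rfl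
  · exact hxa (by rw [← hc, one_smul])
  · exact hxa' (by rw [← hc, neg_one_smul])

theorem eq_or_eq_neg_of_reflections_fix [FiniteDimensional ℝ E] (hE : finrank ℝ E = 3)
    {ι : Type*} [Finite ι] {f ν : ι → E} {i₀ : ι} (hf : ∀ i, ‖f i‖ = ‖f i₀‖)
    (hν : ∀ k, ν k ≠ 0) (hplanes : Function.Injective fun k => (ℝ ∙ ν k)ᗮ)
    (hmaps : ∀ k, MapsTo (ℝ ∙ ν k)ᗮ.reflection (range f) (range f))
    (hfix : ∀ k, f i₀ ∈ (ℝ ∙ ν k)ᗮ) (j : ι) : f j = f i₀ ∨ f j = -f i₀ := by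
  by_contra! hj
  have hind := linearIndependent_pair_of_norm_eq (hf j) hj.1 hj.2
  choose g hg using fun k => hmaps k (mem_range_self j)
  have hg_inj : Function.Injective g := fun k l hkl =>
    hplanes <| congrArg _ <| Submodule.span_singleton_eq_of_reflection_eq hE hind (hν k) (hν l)
      (hfix k) (hfix l) (by rw [← hg k, ← hg l, hkl])
  obtain ⟨k, hk⟩ := Finite.surjective_of_injective hg_inj i₀
  exact hj.1 <| (ℝ ∙ ν k)ᗮ.reflection.injective <| by
    rw [← hg k, hk, Submodule.reflection_mem_subspace_eq_self (hfix k)]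

/-- Given `n ≥ 2` distinct points `f i ∈ S²` and `n` distinct planes
through the origin whose reflections each permute `{f 1, …, f n}`, if every one of the
reflections fixes `f 1`, then `n = 2` and `f 2 = -f 1`. -/
theorem stmt_5
    (n : ℕ) (hn : 2 ≤ n)
    (f : Fin n → EuclideanSpace ℝ (Fin 3))
    (hf : ∀ i, ‖f i‖ = 1) (hinj : Function.Injective f)
    (ν : Fin n → EuclideanSpace ℝ (Fin 3)) (hν : ∀ k, ν k ≠ 0)
    (hdist : ∀ k l, k ≠ l → (ℝ ∙ ν k)ᗮ ≠ (ℝ ∙ ν l)ᗮ)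
    (hperm : ∀ k, (Submodule.reflection (ℝ ∙ ν k)ᗮ) '' Set.range f = Set.range f)
    (hfix : ∀ k, Submodule.reflection (ℝ ∙ ν k)ᗮ (f ⟨0, by omega⟩) = f ⟨0, by omega⟩) :
    n = 2 ∧ f ⟨1, by omega⟩ = -f ⟨0, by omega⟩ := by
  set i₀ : Fin n := ⟨0, by omega⟩
  have key := eq_or_eq_neg_of_reflections_fix finrank_euclideanSpace_fin (i₀ := i₀)
    (fun i => (hf i).trans (hf i₀).symm) hν (fun k l h => by_contra fun hkl => hdist k l hkl h)
    (fun k => mapsTo_iff_image_subset.mpr (hperm k).le)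
    (fun k => (Submodule.reflection_eq_self_iff _).mp (hfix k))
  have hneg : ∀ i, i ≠ i₀ → f i = -f i₀ := fun i hi => (key i).resolve_left (hinj.ne hi)
  refine ⟨?_, hneg _ (by simp [i₀, Fin.ext_iff])⟩
  by_contra hn2
  have h12 := hinj <| (hneg ⟨1, by omega⟩ (by simp [i₀, Fin.ext_iff])).trans
    (hneg ⟨2, by omega⟩ (by simp [i₀, Fin.ext_iff])).symm
  simp [Fin.ext_iff] at h12
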